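/- arXiv:2602.03239 — 8 statements merged into one kernel-verified Lean document; each statement's English description precedes it below -/
import Mathlib

section
/- (Lemma 3.2) Let A ∈ ℝ^{m×p}, B ∈ ℝ^{q×n}, C ∈ ℝ^{m×n}, α > 0, and assume every row of A used below is nonzero. Let (i_k)_{k≥0} be any sequence of row indices in {1,…,m}, and define the BK iterates X^{k+1} = X^k + (α/‖A_{i_k,:}‖²) A_{i_k,:}ᵀ (C_{i_k,:} − A_{i_k,:} X^k B) Bᵀ starting from an arbitrary X⁰ ∈ ℝ^{p×q}. Then for every k ≥ 0, X^k − A⁺ A X^k B B⁺ = X⁰ − A⁺ A X⁰ B B⁺. -/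
open Matrix Finset Filter Topology

/-- Squared Euclidean norm of a vector. -/
noncomputable def vnormSq {k : ℕ} (v : Fin k → ℝ) : ℝ := ∑ j, (v j) ^ 2

/-- Squared Frobenius norm of a matrix. -/
noncomputable def frobSq {a b : ℕ} (X : Matrix (Fin a) (Fin b) ℝ) : ℝ := ∑ i, ∑ j, (X i j) ^ 2

/-- Frobenius norm of a matrix. -/
noncomputable def frobNorm {a b : ℕ} (X : Matrix (Fin a) (Fin b) ℝ) : ℝ := Real.sqrt (frobSq X)

/-- Frobenius (trace) inner product `⟨X, Y⟩_F = tr(Xᵀ Y)`. -/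
noncomputable def frobInner {a b : ℕ} (X Y : Matrix (Fin a) (Fin b) ℝ) : ℝ := Matrix.trace (Xᵀ * Y)

/-- Spectral (operator 2-) norm of a matrix. -/
noncomputable def specNorm {a b : ℕ} (B : Matrix (Fin a) (Fin b) ℝ) : ℝ :=
  ‖LinearMap.toContinuousLinearMap (Matrix.toEuclideanLin B)‖

/-- `Mp` is the Moore–Penrose pseudoinverse of `M`: the four Penrose conditions. -/
def IsMPInv {a b : ℕ} (M : Matrix (Fin a) (Fin b) ℝ) (Mp : Matrix (Fin b) (Fin a) ℝ) : Prop :=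
  M * Mp * M = M ∧ Mp * M * Mp = Mp ∧ (M * Mp)ᵀ = M * Mp ∧ (Mp * M)ᵀ = Mp * M

lemma aux_key {m p q n : ℕ}
    (A : Matrix (Fin m) (Fin p) ℝ) (B : Matrix (Fin q) (Fin n) ℝ)
    (Ap : Matrix (Fin p) (Fin m) ℝ) (Bp : Matrix (Fin n) (Fin q) ℝ)
    (hAp : IsMPInv A Ap) (hBp : IsMPInv B Bp)
    (i : Fin m) (v : Fin n → ℝ) :
    Ap * A * vecMulVec (A i) (B *ᵥ v) * B * Bp = vecMulVec (A i) (B *ᵥ v) := by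
  obtain ⟨hA1, hA2, hA3, hA4⟩ := hAp
  obtain ⟨hB1, hB2, hB3, hB4⟩ := hBp
  have h1 : Ap * A * Aᵀ = Aᵀ := by
    rw [← hA4, ← Matrix.transpose_mul, ← Matrix.mul_assoc, hA1]
  have h3 : Bᵀ * B * Bp = Bᵀ := by
    calc Bᵀ * B * Bp = Bᵀ * (B * Bp)ᵀ := by rw [Matrix.mul_assoc, hB3]
    _ = (B * Bp * B)ᵀ := (Matrix.transpose_mul (B * Bp) B).symm
    _ = Bᵀ := by rw [hB1]
  have h2 : (Ap * A) *ᵥ (A i) = A i := by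
    funext k
    have := congrFun (congrFun h1 k) i
    simpa [Matrix.mul_apply, Matrix.mulVec, dotProduct, Matrix.transpose_apply] using this
  have h4 : (B *ᵥ v) ᵥ* (B * Bp) = B *ᵥ v := by
    calc (B *ᵥ v) ᵥ* (B * Bp) = (v ᵥ* Bᵀ) ᵥ* (B * Bp) := by rw [vecMul_transpose]
    _ = v ᵥ* (Bᵀ * (B * Bp)) := by rw [vecMul_vecMul]
    _ = v ᵥ* Bᵀ := by rw [← Matrix.mul_assoc, h3]
    _ = B *ᵥ v := by rw [vecMul_transpose]
  rw [vecMulVec_eq Unit]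
  calc Ap * A * (replicateCol Unit (A i) * replicateRow Unit (B *ᵥ v)) * B * Bp
      = (Ap * A * replicateCol Unit (A i)) * (replicateRow Unit (B *ᵥ v) * (B * Bp)) := by
        simp only [Matrix.mul_assoc]
    _ = replicateCol Unit (A i) * replicateRow Unit (B *ᵥ v) := by
        rw [← replicateCol_mulVec, h2, ← replicateRow_vecMul, h4]

/-- Lemma 3.2: the BK iterates satisfy
`X^k − A⁺A X^k B B⁺ = X⁰ − A⁺A X⁰ B B⁺` for all `k`. -/
theorem stmt2 {m p q n : ℕ}
    (A : Matrix (Fin m) (Fin p) ℝ) (B : Matrix (Fin q) (Fin n) ℝ) (C : Matrix (Fin m) (Fin n) ℝ)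
    (Ap : Matrix (Fin p) (Fin m) ℝ) (Bp : Matrix (Fin n) (Fin q) ℝ)
    (hAp : IsMPInv A Ap) (hBp : IsMPInv B Bp)
    (α : ℝ) (hα : 0 < α)
    (hrows : ∀ i : Fin m, A i ≠ 0)
    (idx : ℕ → Fin m) (X : ℕ → Matrix (Fin p) (Fin q) ℝ)
    (hX : ∀ k : ℕ, X (k + 1) = X k + (α / vnormSq (A (idx k))) •
      vecMulVec (A (idx k)) (B *ᵥ ((C - A * X k * B) (idx k)))) :
    ∀ k : ℕ, X k - Ap * A * X k * B * Bp = X 0 - Ap * A * X 0 * B * Bp := by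
  intro k
  induction k with
  | zero => rfl
  | succ k ih =>
    rw [hX k]
    set c := α / vnormSq (A (idx k))
    set D := vecMulVec (A (idx k)) (B *ᵥ ((C - A * X k * B) (idx k))) with hD
    have hkey : Ap * A * D * B * Bp = D :=
      aux_key A B Ap Bp ⟨hAp.1, hAp.2.1, hAp.2.2.1, hAp.2.2.2⟩
        ⟨hBp.1, hBp.2.1, hBp.2.2.1, hBp.2.2.2⟩ (idx k) _
    have : Ap * A * (X k + c • D) * B * Bp
        = Ap * A * X k * B * Bp + c • D := by
      have hsmul : Ap * A * (c • D) * B * Bp = c • (Ap * A * D * B * Bp) := by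
        simp [Matrix.mul_smul, Matrix.smul_mul]
      rw [Matrix.mul_add, Matrix.add_mul, Matrix.add_mul, hsmul, hkey]
    rw [this]
    rw [← ih]
    abel
end

section
/- (Single-step error decrease, inequality (3.7)) Let A ∈ ℝ^{m×p}, B ∈ ℝ^{q×n}, C ∈ ℝ^{m×n}, and let X⋆ ∈ ℝ^{p×q} satisfy A X⋆ B = C. Let i ∈ {1,…,m} with A_{i,:} ≠ 0, let α ∈ ℝ, and set X⁺ = X + (α/‖A_{i,:}‖²) A_{i,:}ᵀ (C_{i,:} − A_{i,:} X B) Bᵀ for X ∈ ℝ^{p×q}. Then ‖X⁺ − X⋆‖_F² ≤ ‖X − X⋆‖_F² − ((2α − α²‖B‖²)/‖A_{i,:}‖²) ‖C_{i,:} − A_{i,:} X B‖². -/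
open Matrix Finset Filter Topology

lemma vnormSq_eq_norm_sq {k : ℕ} (v : Fin k → ℝ) :
    vnormSq v = ‖(WithLp.equiv 2 (Fin k → ℝ)).symm v‖ ^ 2 := by
  rw [EuclideanSpace.norm_eq, Real.sq_sqrt (by positivity)]
  simp [vnormSq, sq_abs]

lemma vnormSq_mulVec_le {a b : ℕ} (B : Matrix (Fin a) (Fin b) ℝ) (v : Fin b → ℝ) :
    vnormSq (B *ᵥ v) ≤ specNorm B ^ 2 * vnormSq v := by
  have h := (LinearMap.toContinuousLinearMap (Matrix.toEuclideanLin B)).le_opNorm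
    ((WithLp.equiv 2 (Fin b → ℝ)).symm v)
  have he : (LinearMap.toContinuousLinearMap (Matrix.toEuclideanLin B))
      ((WithLp.equiv 2 (Fin b → ℝ)).symm v) = (WithLp.equiv 2 (Fin a → ℝ)).symm (B *ᵥ v) := by
    simp [LinearMap.toContinuousLinearMap]
  rw [he] at h
  rw [vnormSq_eq_norm_sq, vnormSq_eq_norm_sq]
  calc ‖(WithLp.equiv 2 (Fin a → ℝ)).symm (B *ᵥ v)‖ ^ 2
      ≤ (specNorm B * ‖(WithLp.equiv 2 (Fin b → ℝ)).symm v‖) ^ 2 := by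
        apply sq_le_sq' _ h
        nlinarith [norm_nonneg ((WithLp.equiv 2 (Fin a → ℝ)).symm (B *ᵥ v))]
    _ = specNorm B ^ 2 * ‖(WithLp.equiv 2 (Fin b → ℝ)).symm v‖ ^ 2 := by ring

/-- Single-step error decrease, inequality (3.7). -/
theorem stmt3 {m p q n : ℕ}
    (A : Matrix (Fin m) (Fin p) ℝ) (B : Matrix (Fin q) (Fin n) ℝ) (C : Matrix (Fin m) (Fin n) ℝ)
    (Xstar : Matrix (Fin p) (Fin q) ℝ) (hsol : A * Xstar * B = C)
    (i : Fin m) (hi : A i ≠ 0) (α : ℝ) (X : Matrix (Fin p) (Fin q) ℝ) :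
    frobSq (X + (α / vnormSq (A i)) • vecMulVec (A i) (B *ᵥ ((C - A * X * B) i)) - Xstar)
      ≤ frobSq (X - Xstar)
        - ((2 * α - α ^ 2 * specNorm B ^ 2) / vnormSq (A i)) * vnormSq ((C - A * X * B) i) := by
  set r : Fin n → ℝ := (C - A * X * B) i with hr
  set u : Fin q → ℝ := B *ᵥ r with hu
  set D : Matrix (Fin p) (Fin q) ℝ := X - Xstar with hD
  have hs : 0 < vnormSq (A i) := by
    obtain ⟨j, hj⟩ := Function.ne_iff.mp hi
    have hpos : (0:ℝ) < (A i j) ^ 2 :=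
      lt_of_le_of_ne (sq_nonneg _) (Ne.symm (pow_ne_zero 2 hj))
    exact hpos.trans_le (Finset.single_le_sum (f := fun j => (A i j)^2)
      (fun _ _ => sq_nonneg _) (Finset.mem_univ j))
  set c : ℝ := α / vnormSq (A i) with hc
  have hADB : ∀ l, (A * D * B) i l = - r l := by
    intro l
    have hAD : A * D * B = A * X * B - C := by
      rw [hD, Matrix.mul_sub, Matrix.sub_mul, hsol]
    simp [hAD, hr]
  have step1 : ∀ k : Fin q, ∑ j, D j k * (A i j * u k) = (A * D) i k * u k := by
    intro k
    rw [Matrix.mul_apply, Finset.sum_mul]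
    refine Finset.sum_congr rfl fun j _ => ?_
    ring
  have step2 : ∀ k : Fin q, (A * D) i k * u k = ∑ l, (A * D) i k * B k l * r l := by
    intro k
    rw [hu, Matrix.mulVec, dotProduct, Finset.mul_sum]
    refine Finset.sum_congr rfl fun l _ => ?_
    ring
  have step3 : ∀ l : Fin n, ∑ k, (A * D) i k * B k l * r l = (A * D * B) i l * r l := by
    intro l
    conv_rhs => rw [Matrix.mul_apply, Finset.sum_mul]
  have cross : ∑ j, ∑ k, D j k * (A i j * u k) = - vnormSq r := by
    rw [Finset.sum_comm]
    calc ∑ k, ∑ j, D j k * (A i j * u k)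
        = ∑ k, (A * D) i k * u k := Finset.sum_congr rfl fun k _ => step1 k
      _ = ∑ k, ∑ l, (A * D) i k * B k l * r l := Finset.sum_congr rfl fun k _ => step2 k
      _ = ∑ l, ∑ k, (A * D) i k * B k l * r l := Finset.sum_comm
      _ = ∑ l, (A * D * B) i l * r l := Finset.sum_congr rfl fun l _ => step3 l
      _ = - vnormSq r := by
          simp only [hADB]
          rw [vnormSq, ← Finset.sum_neg_distrib]
          refine Finset.sum_congr rfl fun l _ => ?_
          ring
  have hMentry : ∀ j k, (X + c • vecMulVec (A i) u - Xstar) j k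
      = D j k + c * (A i j * u k) := by
    intro j k
    simp [hD, Matrix.vecMulVec_apply, Matrix.add_apply, Matrix.sub_apply]
    ring
  have expand : frobSq (X + c • vecMulVec (A i) u - Xstar)
      = frobSq D + 2 * c * (∑ j, ∑ k, D j k * (A i j * u k))
        + c ^ 2 * (vnormSq (A i) * vnormSq u) := by
    unfold frobSq
    simp only [hMentry]
    rw [vnormSq, vnormSq, Finset.sum_mul_sum]
    rw [Finset.mul_sum, Finset.mul_sum, ← Finset.sum_add_distrib, ← Finset.sum_add_distrib]
    refine Finset.sum_congr rfl fun j _ => ?_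
    rw [Finset.mul_sum, Finset.mul_sum, ← Finset.sum_add_distrib, ← Finset.sum_add_distrib]
    refine Finset.sum_congr rfl fun k _ => ?_
    ring
  have hBnd : vnormSq u ≤ specNorm B ^ 2 * vnormSq r := by rw [hu]; exact vnormSq_mulVec_le B r
  rw [expand, cross]
  have hrnn : 0 ≤ vnormSq r := Finset.sum_nonneg fun l _ => sq_nonneg _
  have hU : c ^ 2 * (vnormSq (A i) * vnormSq u)
      ≤ α ^ 2 / vnormSq (A i) * (specNorm B ^ 2 * vnormSq r) := by
    have h1 : c ^ 2 * vnormSq (A i) = α ^ 2 / vnormSq (A i) := by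
      rw [hc]; field_simp
    rw [← mul_assoc, h1]
    exact mul_le_mul_of_nonneg_left hBnd (by positivity)
  have h2 : 2 * c * - vnormSq r = -(2 * α / vnormSq (A i) * vnormSq r) := by
    rw [hc]; ring
  have h3 : (2 * α - α ^ 2 * specNorm B ^ 2) / vnormSq (A i) * vnormSq r
      = 2 * α / vnormSq (A i) * vnormSq r
        - α ^ 2 / vnormSq (A i) * (specNorm B ^ 2 * vnormSq r) := by
    field_simp
  rw [h2, h3]
  linarith
end

section
/- Let A ∈ ℝ^{m×p}, B ∈ ℝ^{q×n}, C ∈ ℝ^{m×n}, and let X⋆ ∈ ℝ^{p×q} satisfy A X⋆ B = C. Then for any X ∈ ℝ^{p×q} and any row index i, ⟨A_{i,:}ᵀ (C_{i,:} − A_{i,:} X B) Bᵀ, X − X⋆⟩_F = −‖C_{i,:} − A_{i,:} X B‖². -/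
open Matrix Finset Filter Topology

lemma vnormSq_eq_dotProduct {k : ℕ} (v : Fin k → ℝ) : vnormSq v = v ⬝ᵥ v := by
  simp only [vnormSq, dotProduct, sq]

lemma frobInner_vecMulVec {a b : ℕ} (u : Fin a → ℝ) (w : Fin b → ℝ)
    (Y : Matrix (Fin a) (Fin b) ℝ) :
    frobInner (vecMulVec u w) Y = u ⬝ᵥ (Y *ᵥ w) := by
  rw [frobInner, transpose_vecMulVec, vecMulVec_mul, trace_vecMulVec, dotProduct_comm,
    dotProduct_mulVec]

/-- The key inner-product identity:
`⟨A_{i,:}ᵀ (C_{i,:} − A_{i,:} X B) Bᵀ, X − X⋆⟩_F = −‖C_{i,:} − A_{i,:} X B‖²`. -/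
theorem stmt4 {m p q n : ℕ}
    (A : Matrix (Fin m) (Fin p) ℝ) (B : Matrix (Fin q) (Fin n) ℝ) (C : Matrix (Fin m) (Fin n) ℝ)
    (Xstar : Matrix (Fin p) (Fin q) ℝ) (hsol : A * Xstar * B = C)
    (X : Matrix (Fin p) (Fin q) ℝ) (i : Fin m) :
    frobInner (vecMulVec (A i) (B *ᵥ ((C - A * X * B) i))) (X - Xstar)
      = - vnormSq ((C - A * X * B) i) := by
  set R := C - A * X * B
  have hres : A * (X - Xstar) * B = -R := by
    rw [Matrix.mul_sub, Matrix.sub_mul, hsol, neg_sub]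
  calc frobInner (vecMulVec (A i) (B *ᵥ R i)) (X - Xstar)
      = (A *ᵥ ((X - Xstar) *ᵥ (B *ᵥ R i))) i := frobInner_vecMulVec _ _ _
    _ = (-R *ᵥ R i) i := by rw [mulVec_mulVec, mulVec_mulVec, hres]
    _ = -vnormSq (R i) := by rw [neg_mulVec, Pi.neg_apply, vnormSq_eq_dotProduct]; rfl
end

section
/- (Proposition 3.5, sweep formula) Let A ∈ ℝ^{m×p} have all rows nonzero, let Q ∈ ℝ^{q×n} have orthonormal columns (QᵀQ = I_n), let Ĉ ∈ ℝ^{m×n}, and let α > 0. Define L_α := slt(AAᵀ) + α⁻¹ diag(AAᵀ), where slt(AAᵀ) is the strictly lower triangular part of AAᵀ and diag(AAᵀ) its diagonal part; L_α is invertible. Starting from X^{s,0} = X^s ∈ ℝ^{p×q}, perform one full cycle X^{s,i} = X^{s,i−1} + (α/‖A_{i,:}‖²) A_{i,:}ᵀ (Ĉ_{i,:} − A_{i,:} X^{s,i−1} Q) Qᵀ for i = 1,…,m, and set X^{s+1} = X^{s,m}. Then X^{s+1} = X^s + Aᵀ L_α⁻¹ (Ĉ − A X^s Q) Qᵀ.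 -/
open Matrix Finset Filter Topology

/-- Strictly lower triangular part of a square matrix. -/
def sltPart {k : ℕ} (M : Matrix (Fin k) (Fin k) ℝ) : Matrix (Fin k) (Fin k) ℝ :=
  Matrix.of fun i j => if j < i then M i j else 0

/-- Diagonal part of a square matrix. -/
def diagPart {k : ℕ} (M : Matrix (Fin k) (Fin k) ℝ) : Matrix (Fin k) (Fin k) ℝ :=
  Matrix.diagonal fun i => M i i

noncomputable def sweepW {m : ℕ} (G : Matrix (Fin m) (Fin m) ℝ) (c : Fin m → ℝ) :
    ℕ → Matrix (Fin m) (Fin m) ℝ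
  | 0 => 0
  | (k+1) =>
      if h : k < m then
        sweepW G c k + c ⟨k, h⟩ •
          (Matrix.single (⟨k, h⟩ : Fin m) (⟨k, h⟩ : Fin m) (1:ℝ) *
            (1 - G * sweepW G c k))
      else sweepW G c k

lemma stdBasis_mul_apply {m b : ℕ} (i : Fin m) (M : Matrix (Fin m) (Fin b) ℝ)
    (s : Fin m) (j : Fin b) :
    (Matrix.single i i (1:ℝ) * M) s j = if s = i then M i j else 0 := by
  rw [Matrix.mul_apply]
  by_cases hs : s = i
  · subst hs
    rw [Finset.sum_eq_single s]
    · simp [Matrix.single]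
    · intro t _ ht
      simp [Matrix.single, (Ne.symm ht : ¬ s = t)]
    · simp
  · simp only [if_neg hs]
    apply Finset.sum_eq_zero
    intro t _
    simp only [Matrix.single, Matrix.of_apply, ite_and, ite_mul, one_mul, zero_mul]
    rw [if_neg (fun h => hs h.symm)]

lemma sweepW_rows {m : ℕ} (G : Matrix (Fin m) (Fin m) ℝ) (c : Fin m → ℝ)
    (L : Matrix (Fin m) (Fin m) ℝ)
    (hLlow : ∀ i j : Fin m, i < j → L i j = 0)
    (hLG : ∀ i j : Fin m, j < i → L i j = G i j)
    (hLd : ∀ i : Fin m, c i * L i i = 1) :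
    ∀ k, k ≤ m →
      (∀ r : Fin m, (r : ℕ) < k → ∀ j, (L * sweepW G c k) r j = (1 : Matrix (Fin m) (Fin m) ℝ) r j) ∧
      (∀ r : Fin m, k ≤ (r : ℕ) → ∀ j, sweepW G c k r j = 0) := by
  intro k
  induction k with
  | zero =>
    intro _
    refine ⟨fun r hr => absurd hr (Nat.not_lt_zero _), fun r _ j => ?_⟩
    simp [sweepW]
  | succ k ih =>
    intro hk1
    have hk : k < m := hk1
    obtain ⟨ih1, ih2⟩ := ih (le_of_lt hk)
    set i : Fin m := ⟨k, hk⟩ with hi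
    set Wk := sweepW G c k with hWk
    have hW : sweepW G c (k+1) = Wk + c i • (Matrix.single i i (1:ℝ) * (1 - G * Wk)) := by
      simp [sweepW, hk, hi, hWk]
    have hWapp : ∀ (s : Fin m) (j : Fin m),
        sweepW G c (k+1) s j = Wk s j + (if s = i then c i * ((1 - G * Wk) i j) else 0) := by
      intro s j
      rw [hW]
      simp only [Matrix.add_apply, Matrix.smul_apply, stdBasis_mul_apply, smul_eq_mul]
      by_cases hs : s = i <;> simp [hs]
    constructor
    · intro r hr j
      have hsplit : (L * sweepW G c (k+1)) r j
          = (L * Wk) r j + L r i * (c i * ((1 - G * Wk) i j)) := by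
        rw [Matrix.mul_apply, Matrix.mul_apply]
        have : ∀ s : Fin m, L r s * sweepW G c (k+1) s j
            = L r s * Wk s j + (if s = i then L r i * (c i * ((1 - G * Wk) i j)) else 0) := by
          intro s
          rw [hWapp]
          by_cases hs : s = i <;> simp [hs, mul_add]
        simp_rw [this, Finset.sum_add_distrib, Finset.sum_ite_eq' Finset.univ i]
        simp
      rcases Nat.lt_succ_iff_lt_or_eq.mp hr with hrk | hrk
      · have hri : r < i := hrk
        rw [hsplit, hLlow r i hri, ih1 r hrk j]
        ring
      · have hri : r = i := Fin.ext hrk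
        rw [hri] at hsplit ⊢
        have hLW : (L * Wk) i j = (G * Wk) i j := by
          rw [Matrix.mul_apply, Matrix.mul_apply]
          apply Finset.sum_congr rfl
          intro s _
          by_cases hs : (s : ℕ) < k
          · rw [hLG i s hs]
          · rw [ih2 s (Nat.le_of_not_lt hs) j, mul_zero, mul_zero]
        rw [hsplit, hLW, Matrix.sub_apply, ← mul_assoc, mul_comm (L i i), hLd i]
        simp [Matrix.one_apply]
    · intro r hr j
      rw [hWapp]
      have hri : ¬ r = i := by
        intro h
        rw [h] at hr
        exact absurd hr (by simp [hi])
      rw [if_neg hri, ih2 r (Nat.le_of_succ_le hr) j, add_zero]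

lemma sweepW_left_inv {m : ℕ} (G : Matrix (Fin m) (Fin m) ℝ) (c : Fin m → ℝ)
    (L : Matrix (Fin m) (Fin m) ℝ)
    (hLlow : ∀ i j : Fin m, i < j → L i j = 0)
    (hLG : ∀ i j : Fin m, j < i → L i j = G i j)
    (hLd : ∀ i : Fin m, c i * L i i = 1) :
    L * sweepW G c m = 1 := by
  ext r j
  exact (sweepW_rows G c L hLlow hLG hLd m le_rfl).1 r r.isLt j



/-- Proposition 3.5 (sweep formula): one full cycle of the BK method for `AXQ = Ĉ`
(`Q` with orthonormal columns) equals `X^{s+1} = X^s + Aᵀ L_α⁻¹ (Ĉ − A X^s Q) Qᵀ`,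
where `L_α = slt(AAᵀ) + α⁻¹ diag(AAᵀ)` is invertible. -/
theorem stmt7 {m p q n : ℕ}
    (A : Matrix (Fin m) (Fin p) ℝ) (hrows : ∀ i : Fin m, A i ≠ 0)
    (Q : Matrix (Fin q) (Fin n) ℝ) (hQ : Qᵀ * Q = 1)
    (Chat : Matrix (Fin m) (Fin n) ℝ) (α : ℝ) (hα : 0 < α)
    (Xs : Matrix (Fin p) (Fin q) ℝ) (Y : ℕ → Matrix (Fin p) (Fin q) ℝ)
    (hY0 : Y 0 = Xs)
    (hY : ∀ i : Fin m, Y ((i : ℕ) + 1) = Y (i : ℕ) + (α / vnormSq (A i)) •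
      vecMulVec (A i) (Q *ᵥ ((Chat - A * Y (i : ℕ) * Q) i))) :
    (sltPart (A * Aᵀ) + α⁻¹ • diagPart (A * Aᵀ)).det ≠ 0 ∧
    Y m = Xs + Aᵀ * (sltPart (A * Aᵀ) + α⁻¹ • diagPart (A * Aᵀ))⁻¹
      * (Chat - A * Xs * Q) * Qᵀ := by
  set G := A * Aᵀ with hG
  set L := sltPart G + α⁻¹ • diagPart G with hL
  set c : Fin m → ℝ := fun i => α / vnormSq (A i) with hc
  -- positivity of row norms
  have hd : ∀ i : Fin m, 0 < vnormSq (A i) := by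
    intro i
    have hex : ∃ j, A i j ≠ 0 := by
      by_contra h
      push_neg at h
      exact hrows i (funext h)
    obtain ⟨j, hj⟩ := hex
    exact Finset.sum_pos' (fun t _ => sq_nonneg _)
      ⟨j, Finset.mem_univ j, by positivity⟩
  have hGd : ∀ i : Fin m, G i i = vnormSq (A i) := by
    intro i
    simp [hG, Matrix.mul_apply, vnormSq, sq]
  -- entries of L
  have hLlow : ∀ i j : Fin m, i < j → L i j = 0 := by
    intro i j hij
    simp [hL, sltPart, diagPart, Matrix.diagonal_apply_ne _ hij.ne,
      not_lt_of_gt hij, asymm hij]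
  have hLG : ∀ i j : Fin m, j < i → L i j = G i j := by
    intro i j hij
    simp [hL, sltPart, diagPart, Matrix.diagonal_apply_ne _ hij.ne', hij]
  have hLdiag : ∀ i : Fin m, L i i = α⁻¹ * G i i := by
    intro i
    simp [hL, sltPart, diagPart]
  have hLd : ∀ i : Fin m, c i * L i i = 1 := by
    intro i
    rw [hLdiag i, hGd i, hc]
    field_simp
    exact div_self (hd i).ne'
  -- determinant
  have hdet0 : L.det = ∏ i, L i i :=
    Matrix.det_of_lowerTriangular L (fun i j hij => hLlow i j (by simpa using hij))
  have hdet : L.det ≠ 0 := by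
    rw [hdet0]
    apply Finset.prod_ne_zero_iff.mpr
    intro i _
    rw [hLdiag i, hGd i]
    exact mul_ne_zero (inv_ne_zero hα.ne') (hd i).ne'
  refine ⟨hdet, ?_⟩
  -- inverse via sweep matrix
  have hLW : L * sweepW G c m = 1 :=
    sweepW_left_inv G c L hLlow hLG hLd
  have hinv : L⁻¹ = sweepW G c m := Matrix.inv_eq_right_inv hLW
  -- residual matrix
  set R : Matrix (Fin m) (Fin q) ℝ := (Chat - A * Xs * Q) * Qᵀ with hR
  have hRQ : R * Q = Chat - A * Xs * Q := by
    rw [hR, Matrix.mul_assoc, hQ, Matrix.mul_one]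
  have hRQQ : R * (Q * Qᵀ) = R := by
    rw [← Matrix.mul_assoc, hRQ, hR]
  -- outer product as matrix product
  have hvec : ∀ (M : Matrix (Fin m) (Fin n) ℝ) (i : Fin m),
      vecMulVec (A i) (Q *ᵥ (M i)) =
        Aᵀ * (Matrix.single i i (1:ℝ) * (M * Qᵀ)) := by
    intro M i
    ext j k
    rw [Matrix.vecMulVec_apply, Matrix.mul_apply]
    simp_rw [stdBasis_mul_apply, mul_ite, mul_zero]
    rw [Finset.sum_ite_eq' Finset.univ i]
    simp only [Finset.mem_univ, if_true, Matrix.transpose_apply]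
    simp only [Matrix.mulVec, dotProduct, Matrix.mul_apply, Matrix.transpose_apply,
      Finset.mul_sum]
    apply Finset.sum_congr rfl
    intro t _
    ring
  -- loop invariant
  have hYW : ∀ k, k ≤ m → Y k = Xs + Aᵀ * sweepW G c k * R := by
    intro k
    induction k with
    | zero =>
      intro _
      simp [hY0, sweepW]
    | succ k ih =>
      intro hk1
      have hk : k < m := hk1
      have hYk := ih (le_of_lt hk)
      set i : Fin m := ⟨k, hk⟩ with hi
      set Wk := sweepW G c k with hWk
      have hres : (Chat - A * Y k * Q) * Qᵀ = (1 - G * Wk) * R := by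
        calc (Chat - A * Y k * Q) * Qᵀ
            = (Chat - A * Xs * Q) * Qᵀ - A * (Aᵀ * (Wk * (R * (Q * Qᵀ)))) := by
              rw [hYk]
              simp only [Matrix.mul_add, Matrix.add_mul, Matrix.sub_mul, Matrix.mul_assoc]
              abel
          _ = (1 - G * Wk) * R := by
              rw [hRQQ, ← hR, Matrix.sub_mul, Matrix.one_mul, hG]
              simp only [Matrix.mul_assoc]
      have e := hY i
      rw [hvec (Chat - A * Y k * Q) i, hres] at e
      have hW : sweepW G c (k+1) =
          Wk + c i • (Matrix.single i i (1:ℝ) * (1 - G * Wk)) := by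
        simp [sweepW, hk, hi, hWk]
      rw [e, hYk, hW]
      simp only [Matrix.mul_add, Matrix.add_mul, Matrix.smul_mul, Matrix.mul_smul,
        Matrix.mul_assoc, hc]
      abel
  have hfin := hYW m le_rfl
  rw [hfin, ← hinv, ← Matrix.mul_assoc]
end

section
/- Theorem 5 (BK with B of full row rank): Let A ∈ ℝ^{m×p} have all rows nonzero, let C̃ ∈ ℝ^{m×q}, and let α > 0 with L_α := slt(AAᵀ) + α⁻¹ diag(AAᵀ). Starting from X^{s,0} = X^s ∈ ℝ^{p×q}, perform one full cycle X^{s,i} = X^{s,i−1} + (α/‖A_{i,:}‖²) A_{i,:}ᵀ (C̃_{i,:} − A_{i,:} X^{s,i−1}) for i = 1,…,m, and set X^{s+1} = X^{s,m}. Then X^{s+1} = X^s + Aᵀ L_α⁻¹ (C̃ − A X^s). -/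
open Matrix Finset Filter Topology

/-- Sweep formula for the BK method for `AX = C̃` (multiple right-hand sides):
one full cycle equals `X^{s+1} = X^s + Aᵀ L_α⁻¹ (C̃ − A X^s)`. -/
theorem stmt8 {m p q : ℕ}
    (A : Matrix (Fin m) (Fin p) ℝ) (hrows : ∀ i : Fin m, A i ≠ 0)
    (Ct : Matrix (Fin m) (Fin q) ℝ) (α : ℝ) (hα : 0 < α)
    (Xs : Matrix (Fin p) (Fin q) ℝ) (Y : ℕ → Matrix (Fin p) (Fin q) ℝ)
    (hY0 : Y 0 = Xs)
    (hY : ∀ i : Fin m, Y ((i : ℕ) + 1) = Y (i : ℕ) + (α / vnormSq (A i)) •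
      vecMulVec (A i) ((Ct - A * Y (i : ℕ)) i)) :
    Y m = Xs + Aᵀ * (sltPart (A * Aᵀ) + α⁻¹ • diagPart (A * Aᵀ))⁻¹ * (Ct - A * Xs) := by
  set N : Matrix (Fin m) (Fin m) ℝ := A * Aᵀ with hN
  set L : Matrix (Fin m) (Fin m) ℝ := sltPart N + α⁻¹ • diagPart N with hL
  set R : Matrix (Fin m) (Fin q) ℝ := Ct - A * Xs with hR
  -- diagonal entries
  have hNdiag : ∀ i : Fin m, N i i = vnormSq (A i) := by
    intro i
    simp [hN, Matrix.mul_apply, vnormSq, sq]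
  have hv : ∀ i : Fin m, 0 < vnormSq (A i) := by
    intro i
    have hne := hrows i
    obtain ⟨j, hj⟩ : ∃ j, A i j ≠ 0 := by
      by_contra h
      push_neg at h
      exact hne (funext h)
    apply Finset.sum_pos' (fun k _ => sq_nonneg _)
    exact ⟨j, Finset.mem_univ j, by positivity⟩
  -- L is lower triangular
  have hLT : L.BlockTriangular OrderDual.toDual := by
    intro i j hij
    have hij' : i < j := hij
    simp only [hL, Matrix.add_apply, Matrix.smul_apply, sltPart, diagPart,
      Matrix.of_apply, Matrix.diagonal_apply]
    rw [if_neg (by exact not_lt_of_gt hij'), if_neg (by exact fun h => absurd h (ne_of_lt hij'))]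
    simp
  have hdet : IsUnit L.det := by
    rw [Matrix.det_of_lowerTriangular L hLT]
    rw [isUnit_iff_ne_zero, Finset.prod_ne_zero_iff]
    intro i _
    have : L i i = α⁻¹ * vnormSq (A i) := by
      simp [hL, sltPart, diagPart, Matrix.diagonal_apply, hNdiag i]
    rw [this]
    exact mul_ne_zero (inv_ne_zero (ne_of_gt hα)) (ne_of_gt (hv i))
  set D : Matrix (Fin m) (Fin q) ℝ := L⁻¹ * R with hD
  have hLD : L * D = R := Matrix.mul_nonsing_inv_cancel_left L R hdet
  -- truncation
  set T : ℕ → Matrix (Fin m) (Fin q) ℝ :=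
    fun n => Matrix.of fun j c => if (j : ℕ) < n then D j c else 0 with hT
  -- key induction
  have key : ∀ n, n ≤ m → Y n = Xs + Aᵀ * T n := by
    intro n hn
    induction n with
    | zero =>
      have : T 0 = 0 := by ext j c; simp [hT]
      simp [hY0, this]
    | succ n ih =>
      have hnm : n < m := hn
      have ihn := ih (le_of_lt hnm)
      set i : Fin m := ⟨n, hnm⟩ with hi
      have hYn : Y (n + 1) = Y n + (α / vnormSq (A i)) •
          vecMulVec (A i) ((Ct - A * Y n) i) := hY i
      -- the row identity
      have hrowval : ∀ c, (Ct - A * Y n) i c = α⁻¹ * N i i * D i c := by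
        intro c
        have hRic : R i c = (∑ k, (if k < i then N i k * D k c else 0)) + α⁻¹ * N i i * D i c := by
          have h1 := congrFun (congrFun hLD i) c
          rw [Matrix.mul_apply] at h1
          have h2 : ∀ k : Fin m, L i k * D k c
              = (if k < i then N i k * D k c else 0)
                + (if k = i then α⁻¹ * N i i * D i c else 0) := by
            intro k
            simp only [hL, Matrix.add_apply, Matrix.smul_apply, sltPart, diagPart,
              Matrix.of_apply, Matrix.diagonal_apply, smul_eq_mul]
            by_cases hk : k < i
            · rw [if_pos hk, if_neg (by exact fun h => absurd h.symm (ne_of_lt hk)), if_pos hk,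
                if_neg (ne_of_lt hk)]
              ring
            · rw [if_neg hk, if_neg hk]
              by_cases hk2 : k = i
              · subst hk2; simp
              · rw [if_neg (fun h => hk2 h.symm), if_neg hk2]
                ring
          rw [← h1, Finset.sum_congr rfl (fun k _ => h2 k), Finset.sum_add_distrib,
            Finset.sum_ite_eq' Finset.univ i, if_pos (Finset.mem_univ i)]
        have hAT : (A * (Aᵀ * T n)) i c = ∑ k, (if k < i then N i k * D k c else 0) := by
          rw [← Matrix.mul_assoc, ← hN, Matrix.mul_apply]
          apply Finset.sum_congr rfl
          intro k _
          simp only [hT, Matrix.of_apply]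
          have hiff : ((k : ℕ) < n) ↔ (k < i) := by
            simp only [hi, Fin.lt_def]
          by_cases hk : k < i
          · rw [if_pos (hiff.mpr hk), if_pos hk]
          · rw [if_neg (fun h => hk (hiff.mp h)), if_neg hk]; ring
        have : (Ct - A * Y n) i c = R i c - (A * (Aᵀ * T n)) i c := by
          rw [ihn]
          simp [hR, Matrix.mul_add, Matrix.sub_apply, Matrix.add_apply]
          ring
        rw [this, hRic, hAT]
        ring
      -- the increment
      have hinc : (α / vnormSq (A i)) • vecMulVec (A i) ((Ct - A * Y n) i)
          = Aᵀ * (T (n+1) - T n) := by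
        ext r c
        rw [Matrix.smul_apply, Matrix.vecMulVec_apply, Matrix.mul_apply, hrowval c]
        have hsum : ∀ k : Fin m, Aᵀ r k * (T (n+1) - T n) k c
            = if k = i then A i r * D i c else 0 := by
          intro k
          simp only [Matrix.sub_apply, hT, Matrix.of_apply, Matrix.transpose_apply]
          by_cases hk : k = i
          · subst hk
            rw [if_pos (by simp [hi]), if_neg (by simp [hi]), if_pos rfl]
            ring
          · have hki : (k : ℕ) ≠ n := by
              intro h
              exact hk (Fin.ext (by simp [hi, h]))
            rw [if_neg hk]
            by_cases h2 : (k : ℕ) < n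
            · rw [if_pos (Nat.lt_succ_of_lt h2), if_pos h2]; ring
            · rw [if_neg (by omega), if_neg h2]; ring
        rw [Finset.sum_congr rfl (fun k _ => hsum k), Finset.sum_ite_eq' Finset.univ i]
        rw [if_pos (Finset.mem_univ i)]
        rw [← hNdiag i]
        have hNii : N i i ≠ 0 := by rw [hNdiag i]; exact ne_of_gt (hv i)
        field_simp
        rw [smul_eq_mul, div_mul_div_comm, div_eq_iff (mul_ne_zero hNii (ne_of_gt hα))]
        ring
      rw [hYn, hinc, ihn, Matrix.mul_sub]
      abel
  have hTm : T m = D := by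
    ext j c
    simp [hT, j.isLt]
  rw [key m le_rfl, hTm, hD, Matrix.mul_assoc]
end

section
/- (Deterministic core of Theorem 2.2: one-step contraction of RBK in weighted average) Let A ∈ ℝ^{m×p} have all rows nonzero, B ∈ ℝ^{q×n}, C ∈ ℝ^{m×n}, and let X⋆ ∈ ℝ^{p×q} satisfy A X⋆ B = C. Let 0 < α < 2/‖B‖². Let σ_A > 0 satisfy ‖A v‖ ≥ σ_A ‖v‖ for every v in the column space of Aᵀ, and σ_B > 0 satisfy ‖Bᵀ w‖ ≥ σ_B ‖w‖ for every w in the column space of B. Let X ∈ ℝ^{p×q} be such that every column of X − X⋆ lies in the column space of Aᵀ and every column of (X − X⋆)ᵀ lies in the column space of B. For each i set X⁺ᵢ = X + (α/‖A_{i,:}‖²) A_{i,:}ᵀ (C_{i,:} − A_{i,:} X B) Bᵀ. Then Σ_{i=1}^{m} (‖A_{i,:}‖²/‖A‖_F²) ‖X⁺ᵢ − X⋆‖_F² ≤ δ ‖X − X⋆‖_F², where δ = 1 − ((2α − α²‖B‖²)/‖A‖_F²) σ_A² σ_B². -/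
open Matrix Finset Filter Topology

lemma vnormSq_nonneg {k : ℕ} (v : Fin k → ℝ) : 0 ≤ vnormSq v :=
  Finset.sum_nonneg fun _ _ => sq_nonneg _

lemma frobSq_nonneg {a b : ℕ} (X : Matrix (Fin a) (Fin b) ℝ) : 0 ≤ frobSq X :=
  Finset.sum_nonneg fun _ _ => Finset.sum_nonneg fun _ _ => sq_nonneg _

lemma vnormSq_pos {k : ℕ} {v : Fin k → ℝ} (hv : v ≠ 0) : 0 < vnormSq v := by
  rcases Function.ne_iff.mp hv with ⟨j, hj⟩
  have h : (0:ℝ) < (v j) ^ 2 := pow_two_pos_of_ne_zero hj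
  exact lt_of_lt_of_le h (Finset.single_le_sum (fun i _ => sq_nonneg (v i)) (Finset.mem_univ j))

lemma euclid_norm_eq {k : ℕ} (v : Fin k → ℝ) :
    ‖(WithLp.equiv 2 (Fin k → ℝ)).symm v‖ = Real.sqrt (vnormSq v) := by
  rw [EuclideanSpace.norm_eq]
  congr 1
  unfold vnormSq
  refine Finset.sum_congr rfl fun j _ => ?_
  simp [Real.norm_eq_abs, sq_abs]

lemma spec_bound {a b : ℕ} (B : Matrix (Fin a) (Fin b) ℝ) (x : Fin b → ℝ) :
    vnormSq (B *ᵥ x) ≤ specNorm B ^ 2 * vnormSq x := by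
  have h := (LinearMap.toContinuousLinearMap (Matrix.toEuclideanLin B)).le_opNorm
    ((WithLp.equiv 2 (Fin b → ℝ)).symm x)
  rw [LinearMap.coe_toContinuousLinearMap'] at h
  rw [show (Matrix.toEuclideanLin B) ((WithLp.equiv 2 (Fin b → ℝ)).symm x)
      = (WithLp.equiv 2 (Fin a → ℝ)).symm (B *ᵥ x) from rfl] at h
  rw [euclid_norm_eq, euclid_norm_eq] at h
  have h1 : 0 ≤ Real.sqrt (vnormSq (B *ᵥ x)) := Real.sqrt_nonneg _
  have h2 : Real.sqrt (vnormSq (B *ᵥ x)) ^ 2 = vnormSq (B *ᵥ x) :=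
    Real.sq_sqrt (vnormSq_nonneg _)
  have h3 : Real.sqrt (vnormSq x) ^ 2 = vnormSq x := Real.sq_sqrt (vnormSq_nonneg _)
  have h4 := mul_self_le_mul_self h1 h
  unfold specNorm
  nlinarith [Real.sqrt_nonneg (vnormSq x), norm_nonneg
    (LinearMap.toContinuousLinearMap (Matrix.toEuclideanLin B))]

lemma sq_lower {k l : ℕ} {σ : ℝ} (hσ : 0 ≤ σ) {v : Fin k → ℝ} {w : Fin l → ℝ}
    (h : σ * Real.sqrt (vnormSq v) ≤ Real.sqrt (vnormSq w)) :
    σ ^ 2 * vnormSq v ≤ vnormSq w := by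
  have h2 : Real.sqrt (vnormSq w) ^ 2 = vnormSq w := Real.sq_sqrt (vnormSq_nonneg _)
  have h3 : Real.sqrt (vnormSq v) ^ 2 = vnormSq v := Real.sq_sqrt (vnormSq_nonneg _)
  have h1 : 0 ≤ σ * Real.sqrt (vnormSq v) := mul_nonneg hσ (Real.sqrt_nonneg _)
  have h4 := mul_self_le_mul_self h1 h
  nlinarith [Real.sqrt_nonneg (vnormSq v), Real.sqrt_nonneg (vnormSq w)]

/-- Deterministic core of Theorem 2.2: one-step contraction of RBK in weighted average,
with factor `δ = 1 − ((2α − α²‖B‖²)/‖A‖_F²) σ_A² σ_B²`. -/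
theorem stmt13 {m p q n : ℕ}
    (A : Matrix (Fin m) (Fin p) ℝ) (hrows : ∀ i : Fin m, A i ≠ 0)
    (B : Matrix (Fin q) (Fin n) ℝ) (C : Matrix (Fin m) (Fin n) ℝ)
    (Xstar : Matrix (Fin p) (Fin q) ℝ) (hsol : A * Xstar * B = C)
    (α : ℝ) (hα1 : 0 < α) (hα2 : α < 2 / specNorm B ^ 2)
    (σA σB : ℝ) (hσA : 0 < σA) (hσB : 0 < σB)
    (hA : ∀ v : Fin p → ℝ, (∃ u : Fin m → ℝ, v = Aᵀ *ᵥ u) →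
      σA * Real.sqrt (vnormSq v) ≤ Real.sqrt (vnormSq (A *ᵥ v)))
    (hB : ∀ w : Fin q → ℝ, (∃ u : Fin n → ℝ, w = B *ᵥ u) →
      σB * Real.sqrt (vnormSq w) ≤ Real.sqrt (vnormSq (Bᵀ *ᵥ w)))
    (X : Matrix (Fin p) (Fin q) ℝ)
    (hcol : ∀ j : Fin q, ∃ u : Fin m → ℝ, (fun i => (X - Xstar) i j) = Aᵀ *ᵥ u)
    (hrow : ∀ i : Fin p, ∃ w : Fin n → ℝ, (X - Xstar) i = B *ᵥ w) :
    ∑ i : Fin m, (vnormSq (A i) / frobSq A) *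
        frobSq (X + (α / vnormSq (A i)) • vecMulVec (A i) (B *ᵥ ((C - A * X * B) i)) - Xstar)
      ≤ (1 - ((2 * α - α ^ 2 * specNorm B ^ 2) / frobSq A) * (σA ^ 2 * σB ^ 2))
          * frobSq (X - Xstar) := by
  set E := X - Xstar with hE
  set s := specNorm B with hs
  have hs0 : 0 ≤ s := norm_nonneg _
  have hspos : 0 < s := by
    rcases lt_or_eq_of_le hs0 with h | h
    · exact h
    · exfalso; rw [← h] at hα2; simp at hα2; linarith
  set K := 2 * α - α ^ 2 * s ^ 2 with hK
  have hKpos : 0 < K := by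
    have : α * s ^ 2 < 2 := by
      have := (lt_div_iff₀ (by positivity : (0:ℝ) < s ^ 2)).mp hα2
      linarith
    nlinarith
  have hres : C - A * X * B = -(A * E * B) := by
    rw [← hsol, hE, Matrix.mul_sub, Matrix.sub_mul]
    abel
  set R := A * E * B with hR
  have hrowfact : ∀ i : Fin m, R i = Bᵀ *ᵥ (fun k => ∑ j, A i j * E j k) := by
    intro i
    funext l
    show (A * E * B) i l = _
    simp only [Matrix.mul_apply, Matrix.mulVec, dotProduct, Matrix.transpose_apply]
    refine Finset.sum_congr rfl fun k _ => ?_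
    ring
  have hinner : ∀ i : Fin m,
      (∑ j, ∑ k, E j k * (A i j * (B *ᵥ R i) k)) = vnormSq (R i) := by
    intro i
    have e1 : (∑ j, ∑ k, E j k * (A i j * (B *ᵥ R i) k))
        = ∑ k, (∑ j, A i j * E j k) * (B *ᵥ R i) k := by
      rw [Finset.sum_comm]
      refine Finset.sum_congr rfl fun k _ => ?_
      rw [Finset.sum_mul]
      refine Finset.sum_congr rfl fun j _ => ?_
      ring
    rw [e1]
    unfold vnormSq
    simp only [Matrix.mulVec, dotProduct, Finset.mul_sum]
    rw [Finset.sum_comm]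
    refine Finset.sum_congr rfl fun l _ => ?_
    have e2 : (∑ k, (∑ j, A i j * E j k) * (B k l * R i l))
        = (∑ k, Bᵀ l k * (∑ j, A i j * E j k)) * R i l := by
      rw [Finset.sum_mul]
      refine Finset.sum_congr rfl fun k _ => ?_
      rw [Matrix.transpose_apply]
      ring
    rw [e2]
    have hr := congrFun (hrowfact i) l
    simp only [Matrix.mulVec, dotProduct] at hr
    rw [← hr]
    ring
  have hper : ∀ i : Fin m,
      frobSq (X + (α / vnormSq (A i)) • vecMulVec (A i) (B *ᵥ ((C - A * X * B) i)) - Xstar)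
        ≤ frobSq E - K / vnormSq (A i) * vnormSq (R i) := by
    intro i
    have hai : 0 < vnormSq (A i) := vnormSq_pos (hrows i)
    set c := α / vnormSq (A i) with hc
    have hXE : X + c • vecMulVec (A i) (B *ᵥ ((C - A * X * B) i)) - Xstar
        = E + c • vecMulVec (A i) (-(B *ᵥ R i)) := by
      rw [hres, hE]
      have h5 : (-R) i = -(R i) := rfl
      rw [h5, Matrix.mulVec_neg]
      abel
    rw [hXE]
    have split3 : ∀ (f g h : Fin p → Fin q → ℝ),
        (∑ j, ∑ k, (f j k - g j k + h j k))
          = (∑ j, ∑ k, f j k) - (∑ j, ∑ k, g j k) + (∑ j, ∑ k, h j k) := by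
      intro f g h
      rw [← Finset.sum_sub_distrib, ← Finset.sum_add_distrib]
      refine Finset.sum_congr rfl fun j _ => ?_
      rw [← Finset.sum_sub_distrib, ← Finset.sum_add_distrib]
    have hexp : frobSq (E + c • vecMulVec (A i) (-(B *ᵥ R i)))
        = frobSq E - 2 * c * (∑ j, ∑ k, E j k * (A i j * (B *ᵥ R i) k))
          + c ^ 2 * (vnormSq (A i) * vnormSq (B *ᵥ R i)) := by
      unfold frobSq
      have point : ∀ (j : Fin p) (k : Fin q),
          ((E + c • vecMulVec (A i) (-(B *ᵥ R i))) j k) ^ 2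
            = (E j k) ^ 2 - 2 * c * (E j k * (A i j * (B *ᵥ R i) k))
              + c ^ 2 * ((A i j) ^ 2 * ((B *ᵥ R i) k) ^ 2) := by
        intro j k
        simp only [Matrix.add_apply, Matrix.smul_apply, Matrix.vecMulVec_apply, smul_eq_mul,
          Pi.neg_apply]
        ring
      simp_rw [point]
      rw [split3]
      congr 1
      · congr 1
        rw [Finset.mul_sum]
        refine Finset.sum_congr rfl fun j _ => ?_
        rw [Finset.mul_sum]
      · unfold vnormSq
        rw [Fintype.sum_mul_sum, Finset.mul_sum]
        refine Finset.sum_congr rfl fun j _ => ?_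
        rw [Finset.mul_sum]
    rw [hexp, hinner i]
    have hBr : vnormSq (B *ᵥ R i) ≤ s ^ 2 * vnormSq (R i) := spec_bound B (R i)
    have h1 : c ^ 2 * (vnormSq (A i) * vnormSq (B *ᵥ R i))
        ≤ α ^ 2 / vnormSq (A i) * (s ^ 2 * vnormSq (R i)) := by
      rw [hc, div_pow]
      have e3 : α ^ 2 / vnormSq (A i) ^ 2 * (vnormSq (A i) * vnormSq (B *ᵥ R i))
          = α ^ 2 / vnormSq (A i) * vnormSq (B *ᵥ R i) := by
        field_simp
      rw [e3]
      exact mul_le_mul_of_nonneg_left hBr (by positivity)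
    have h2 : 2 * c * vnormSq (R i) = 2 * α / vnormSq (A i) * vnormSq (R i) := by
      rw [hc]; ring
    rw [h2]
    have e4 : K / vnormSq (A i) * vnormSq (R i)
        = 2 * α / vnormSq (A i) * vnormSq (R i)
          - α ^ 2 / vnormSq (A i) * (s ^ 2 * vnormSq (R i)) := by
      rw [hK]; field_simp
    rw [e4]
    linarith
  have hwsum : (∑ i : Fin m, vnormSq (A i) / frobSq A) ≤ 1 := by
    rw [← Finset.sum_div]
    have e5 : (∑ i : Fin m, vnormSq (A i)) = frobSq A := rfl
    rw [e5]
    exact div_self_le_one _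
  have hRfrob : (∑ i : Fin m, vnormSq (R i)) = frobSq R := rfl
  have hlow : σA ^ 2 * σB ^ 2 * frobSq E ≤ frobSq R := by
    have step1 : σA ^ 2 * frobSq E ≤ frobSq (A * E) := by
      have hcolsum : frobSq (A * E) = ∑ j : Fin q, vnormSq (A *ᵥ (fun i => E i j)) := by
        unfold frobSq vnormSq
        rw [Finset.sum_comm]
        rfl
      have hEcolsum : frobSq E = ∑ j : Fin q, vnormSq (fun i => E i j) := by
        unfold frobSq vnormSq; rw [Finset.sum_comm]
      rw [hcolsum, hEcolsum, Finset.mul_sum]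
      exact Finset.sum_le_sum fun j _ => sq_lower hσA.le (hA _ (hcol j))
    have step2 : σB ^ 2 * frobSq (A * E) ≤ frobSq R := by
      have hrowsum : frobSq R = ∑ i : Fin m, vnormSq (Bᵀ *ᵥ ((A * E) i)) := by
        unfold frobSq vnormSq
        refine Finset.sum_congr rfl fun i _ => ?_
        refine Finset.sum_congr rfl fun l _ => ?_
        congr 1
        show (A * E * B) i l = _
        simp only [Matrix.mul_apply, Matrix.mulVec, dotProduct, Matrix.transpose_apply]
        refine Finset.sum_congr rfl fun k _ => ?_
        ring
      have hAErowsum : frobSq (A * E) = ∑ i : Fin m, vnormSq ((A * E) i) := rfl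
      rw [hrowsum, hAErowsum, Finset.mul_sum]
      refine Finset.sum_le_sum fun i _ => ?_
      refine sq_lower hσB.le (hB _ ?_)
      choose w hw using hrow
      refine ⟨∑ j, A i j • w j, ?_⟩
      funext k
      simp only [Matrix.mul_apply, Matrix.mulVec, dotProduct, Finset.sum_apply,
        Pi.smul_apply, smul_eq_mul]
      have key : ∀ j, A i j * E j k = ∑ l, A i j * (B k l * w j l) := by
        intro j
        rw [hw j]
        simp only [Matrix.mulVec, dotProduct]
        rw [Finset.mul_sum]
      calc (∑ j, A i j * E j k)
          = ∑ j, ∑ l, A i j * (B k l * w j l) := Finset.sum_congr rfl fun j _ => key j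
        _ = ∑ l, ∑ j, A i j * (B k l * w j l) := Finset.sum_comm
        _ = ∑ l, B k l * ∑ j, A i j * w j l := by
            refine Finset.sum_congr rfl fun l _ => ?_
            rw [Finset.mul_sum]
            refine Finset.sum_congr rfl fun j _ => ?_
            ring
    nlinarith [frobSq_nonneg (A * E), frobSq_nonneg E]
  calc ∑ i : Fin m, (vnormSq (A i) / frobSq A) *
        frobSq (X + (α / vnormSq (A i)) • vecMulVec (A i) (B *ᵥ ((C - A * X * B) i)) - Xstar)
      ≤ ∑ i : Fin m, (vnormSq (A i) / frobSq A) *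
          (frobSq E - K / vnormSq (A i) * vnormSq (R i)) := by
        refine Finset.sum_le_sum fun i _ => ?_
        exact mul_le_mul_of_nonneg_left (hper i)
          (div_nonneg (vnormSq_nonneg _) (frobSq_nonneg A))
    _ = (∑ i : Fin m, vnormSq (A i) / frobSq A) * frobSq E
          - K / frobSq A * frobSq R := by
        rw [Finset.sum_mul, ← hRfrob, Finset.mul_sum, ← Finset.sum_sub_distrib]
        refine Finset.sum_congr rfl fun i _ => ?_
        have hai : (vnormSq (A i)) ≠ 0 := (vnormSq_pos (hrows i)).ne'
        rw [mul_sub]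
        congr 1
        have e6 : vnormSq (A i) / frobSq A * (K / vnormSq (A i) * vnormSq (R i))
            = (vnormSq (A i) / vnormSq (A i)) * (K / frobSq A * vnormSq (R i)) := by
          ring
        rw [e6, div_self hai, one_mul]
    _ ≤ frobSq E - K / frobSq A * (σA ^ 2 * σB ^ 2 * frobSq E) := by
        have h1 : (∑ i : Fin m, vnormSq (A i) / frobSq A) * frobSq E ≤ frobSq E := by
          nlinarith [hwsum, frobSq_nonneg E, Finset.sum_nonneg
            (fun i (_ : i ∈ (Finset.univ : Finset (Fin m))) =>
              div_nonneg (vnormSq_nonneg (A i)) (frobSq_nonneg A))]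
        have h2 : K / frobSq A * (σA ^ 2 * σB ^ 2 * frobSq E) ≤ K / frobSq A * frobSq R :=
          mul_le_mul_of_nonneg_left hlow (div_nonneg hKpos.le (frobSq_nonneg A))
        linarith
    _ = (1 - (K / frobSq A) * (σA ^ 2 * σB ^ 2)) * frobSq E := by ring
end

section
/- (Monotonicity of the convergence-factor upper bound in θ, Section 4.3) Let A ∈ ℝ^{m×p} have all rows nonzero, let Ω ⊆ {1,…,m} and ε ∈ (0,1) be such that S := Σ_{i∉Ω} ‖A_{i,:}‖² + ε Σ_{i∈Ω} ‖A_{i,:}‖² < ‖A‖_F² (which holds whenever Ω ≠ ∅ and ε < 1). For θ ∈ [0,1] set φ_θ := θ/S + (1−θ)/‖A‖_F² and δ_θ := 1 − (2α − α²‖B‖²) · φ_θ · σ_A² σ_B², where 0 < α < 2/‖B‖², B ∈ ℝ^{q×n} is nonzero, and σ_A, σ_B > 0. Then θ ↦ δ_θ is strictly decreasing on [0,1]; in particular δ_θ < δ_0 = 1 − ((2α − α²‖B‖²)/‖A‖_F²) σ_A² σ_B² for all θ ∈ (0,1]. -/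
open Matrix Finset Filter Topology

lemma specNorm_pos' {a b : ℕ} (B : Matrix (Fin a) (Fin b) ℝ) (h : B ≠ 0) :
    0 < specNorm B := by
  unfold specNorm
  rw [norm_pos_iff]
  intro hc
  apply h
  have h1 : Matrix.toEuclideanLin B = 0 := by
    ext x i
    have := congrArg (fun f => f x) (congrArg ContinuousLinearMap.toLinearMap hc)
    rw [show (Matrix.toEuclideanLin B) x = 0 by simpa using this]; simp
  exact (LinearEquiv.map_eq_zero_iff Matrix.toEuclideanLin).mp h1

/-- Monotonicity of the convergence-factor upper bound `δ_θ` in `θ` (Section 4.3):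
`θ ↦ δ_θ` is strictly decreasing on `[0,1]`, and `δ_θ < δ_0` for `θ ∈ (0,1]`. -/
theorem stmt16 {m p q n : ℕ}
    (A : Matrix (Fin m) (Fin p) ℝ) (hrows : ∀ i : Fin m, A i ≠ 0)
    (Ω : Finset (Fin m)) (ε : ℝ) (hε0 : 0 < ε) (hε1 : ε < 1)
    (S : ℝ) (hSdef : S = ∑ i ∈ Ωᶜ, vnormSq (A i) + ε * ∑ i ∈ Ω, vnormSq (A i))
    (hS : S < frobSq A)
    (B : Matrix (Fin q) (Fin n) ℝ) (hBne : B ≠ 0)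
    (α : ℝ) (hα1 : 0 < α) (hα2 : α < 2 / specNorm B ^ 2)
    (σA σB : ℝ) (hσA : 0 < σA) (hσB : 0 < σB) :
    StrictAntiOn (fun θ : ℝ =>
        1 - (2 * α - α ^ 2 * specNorm B ^ 2) * (θ / S + (1 - θ) / frobSq A)
          * (σA ^ 2 * σB ^ 2)) (Set.Icc 0 1) ∧
    ∀ θ ∈ Set.Ioc (0 : ℝ) 1,
      1 - (2 * α - α ^ 2 * specNorm B ^ 2) * (θ / S + (1 - θ) / frobSq A) * (σA ^ 2 * σB ^ 2)
        < 1 - ((2 * α - α ^ 2 * specNorm B ^ 2) / frobSq A) * (σA ^ 2 * σB ^ 2) := by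
  -- basic positivity facts
  have hb : 0 < specNorm B := specNorm_pos' B hBne
  have hb2 : 0 < specNorm B ^ 2 := by positivity
  have hc : 0 < 2 * α - α ^ 2 * specNorm B ^ 2 := by
    have : α * specNorm B ^ 2 < 2 := (lt_div_iff₀ hb2).mp hα2
    nlinarith
  have hSnn : 0 ≤ S := by
    rw [hSdef]
    have h1 : 0 ≤ ∑ i ∈ Ωᶜ, vnormSq (A i) :=
      Finset.sum_nonneg fun i _ => Finset.sum_nonneg fun j _ => sq_nonneg _
    have h2 : 0 ≤ ∑ i ∈ Ω, vnormSq (A i) :=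
      Finset.sum_nonneg fun i _ => Finset.sum_nonneg fun j _ => sq_nonneg _
    positivity
  have hF : 0 < frobSq A := lt_of_le_of_lt hSnn hS
  have hSpos : 0 < S := by
    rw [hSdef]
    rcases Finset.eq_empty_or_nonempty Ω with hΩ | hΩ
    · simp only [hΩ, Finset.sum_empty, mul_zero, add_zero, Finset.compl_empty]
      have heq : (∑ i, vnormSq (A i)) = frobSq A := rfl
      rw [heq]; exact hF
    · have h1 : 0 ≤ ∑ i ∈ Ωᶜ, vnormSq (A i) :=
        Finset.sum_nonneg fun i _ => Finset.sum_nonneg fun j _ => sq_nonneg _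
      have h2 : 0 < ∑ i ∈ Ω, vnormSq (A i) := by
        apply Finset.sum_pos _ hΩ
        intro i _
        have := hrows i
        have hj : ∃ j, A i j ≠ 0 := by
          by_contra hcon
          push_neg at hcon
          exact this (funext hcon)
        obtain ⟨j, hj⟩ := hj
        exact Finset.sum_pos' (fun j _ => sq_nonneg _)
          ⟨j, Finset.mem_univ j, by positivity⟩
      positivity
  have hK : 0 < σA ^ 2 * σB ^ 2 := by positivity
  have hinv : 1 / frobSq A < 1 / S := by
    apply one_div_lt_one_div_of_lt hSpos hS
  have hmono : StrictAntiOn (fun θ : ℝ =>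
      1 - (2 * α - α ^ 2 * specNorm B ^ 2) * (θ / S + (1 - θ) / frobSq A)
        * (σA ^ 2 * σB ^ 2)) (Set.Icc 0 1) := by
    intro x _ y _ hxy
    simp only
    have key : x / S + (1 - x) / frobSq A < y / S + (1 - y) / frobSq A := by
      have h1 : x / S = x * (1 / S) := by ring
      have h2 : y / S = y * (1 / S) := by ring
      rw [div_add_div _ _ (ne_of_gt hSpos) (ne_of_gt hF),
          div_add_div _ _ (ne_of_gt hSpos) (ne_of_gt hF)]
      rw [div_lt_div_iff₀ (by positivity) (by positivity)]
      nlinarith [mul_pos (mul_pos (sub_pos.mpr hxy) (sub_pos.mpr hS)) (mul_pos hSpos hF)]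
    nlinarith [mul_pos hc hK]
  refine ⟨hmono, fun θ hθ => ?_⟩
  have h0 : (0 : ℝ) ∈ Set.Icc (0 : ℝ) 1 := by norm_num
  have hθ' : θ ∈ Set.Icc (0 : ℝ) 1 := ⟨le_of_lt hθ.1, hθ.2⟩
  have := hmono h0 hθ' hθ.1
  simp only at this
  calc 1 - (2 * α - α ^ 2 * specNorm B ^ 2) * (θ / S + (1 - θ) / frobSq A) * (σA ^ 2 * σB ^ 2)
      < 1 - (2 * α - α ^ 2 * specNorm B ^ 2) * ((0:ℝ) / S + (1 - 0) / frobSq A) * (σA ^ 2 * σB ^ 2) := this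
    _ = 1 - ((2 * α - α ^ 2 * specNorm B ^ 2) / frobSq A) * (σA ^ 2 * σB ^ 2) := by
        field_simp
        ring
end

section
/- (Lower bound for ζ, inequality (eq:zetaA) in the proof of Theorem 4.2) Let A ∈ ℝ^{m×p} have all rows nonzero and let R ∈ ℝ^{m×n} with R ≠ 0. Define Ω := { i : ‖R_{i,:}‖²/‖A_{i,:}‖² < (1/m) Σ_{j=1}^m ‖R_{j,:}‖²/‖A_{j,:}‖² }, let ε ∈ (0,1] be defined by (1/m) Σ_j ‖R_{j,:}‖²/‖A_{j,:}‖² = ε · max_j ‖R_{j,:}‖²/‖A_{j,:}‖², and set ζ := (1/2)[ (max_i ‖R_{i,:}‖²/‖A_{i,:}‖²)/‖R‖_F² + 1/‖A‖_F² ]. Then ζ ‖A‖_F² ≥ (1/2) · ‖A‖_F² / ( Σ_{i∉Ω} ‖A_{i,:}‖² + ε Σ_{i∈Ω} ‖A_{i,:}‖² ) + 1/2; equivalently ζ ≥ (1/2)/( Σ_{i∉Ω} ‖A_{i,:}‖² + ε Σ_{i∈Ω} ‖A_{i,:}‖² ) + (1/2)/‖A‖_F² ≥ 1/‖A‖_F².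 -/
open Matrix Finset Filter Topology

/-- Lower bound for `ζ` (inequality (eq:zetaA) in the proof of Theorem 4.2). -/
theorem stmt18 {m p n : ℕ}
    (A : Matrix (Fin m) (Fin p) ℝ) (hrows : ∀ i : Fin m, A i ≠ 0)
    (R : Matrix (Fin m) (Fin n) ℝ) (hR0 : R ≠ 0)
    (Ω : Finset (Fin m))
    (hΩ : Ω = Finset.univ.filter fun i =>
      vnormSq (R i) / vnormSq (A i)
        < (1 / (m : ℝ)) * ∑ j : Fin m, vnormSq (R j) / vnormSq (A j))
    (istar : Fin m)
    (hmax : ∀ i : Fin m,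
      vnormSq (R i) / vnormSq (A i) ≤ vnormSq (R istar) / vnormSq (A istar))
    (ε : ℝ) (hε0 : 0 < ε) (hε1 : ε ≤ 1)
    (hεdef : (1 / (m : ℝ)) * ∑ j : Fin m, vnormSq (R j) / vnormSq (A j)
      = ε * (vnormSq (R istar) / vnormSq (A istar)))
    (S ζ : ℝ)
    (hSdef : S = ∑ i ∈ Ωᶜ, vnormSq (A i) + ε * ∑ i ∈ Ω, vnormSq (A i))
    (hζ : ζ = (1 / 2) * ((vnormSq (R istar) / vnormSq (A istar)) / frobSq R + 1 / frobSq A)) :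
    (1 / 2) * frobSq A / S + 1 / 2 ≤ ζ * frobSq A ∧
    (1 / 2) / S + (1 / 2) / frobSq A ≤ ζ ∧
    1 / frobSq A ≤ (1 / 2) / S + (1 / 2) / frobSq A := by
  -- row norms are positive
  have hApos : ∀ i, 0 < vnormSq (A i) := by
    intro i
    have h := hrows i
    rw [Function.ne_iff] at h
    obtain ⟨j, hj⟩ := h
    exact Finset.sum_pos' (fun k _ => sq_nonneg _) ⟨j, Finset.mem_univ j, pow_two_pos_of_ne_zero hj⟩
  have hRnn : ∀ (i : Fin m), 0 ≤ vnormSq (R i) := fun i =>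
    Finset.sum_nonneg fun k _ => sq_nonneg _
  have hfA : frobSq A = ∑ i, vnormSq (A i) := rfl
  have hfR : frobSq R = ∑ i, vnormSq (R i) := rfl
  have hfApos : 0 < frobSq A := by
    replace hR0 := Function.ne_iff.mp hR0
    obtain ⟨i, _⟩ := hR0
    rw [hfA]
    exact Finset.sum_pos (fun j _ => hApos j) ⟨i, Finset.mem_univ i⟩
  have hfRpos : 0 < frobSq R := by
    replace hR0 := Function.ne_iff.mp hR0
    obtain ⟨i, hi⟩ := hR0
    rw [Function.ne_iff] at hi
    obtain ⟨j, hj⟩ := hi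
    rw [hfR]
    refine Finset.sum_pos' (fun k _ => hRnn k) ⟨i, Finset.mem_univ i, ?_⟩
    exact Finset.sum_pos' (fun k _ => sq_nonneg _) ⟨j, Finset.mem_univ j, pow_two_pos_of_ne_zero hj⟩
  set M : ℝ := vnormSq (R istar) / vnormSq (A istar) with hM
  have hMpos : 0 < M := by
    have : ∃ i : Fin m, 0 < vnormSq (R i) := by
      by_contra h
      push_neg at h
      have : frobSq R ≤ 0 := by
        rw [hfR]; exact Finset.sum_nonpos fun i _ => h i
      linarith
    obtain ⟨i, hi⟩ := this
    exact lt_of_lt_of_le (div_pos hi (hApos i)) (hmax i)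
  have hsplitA : ∑ i ∈ Ωᶜ, vnormSq (A i) + ∑ i ∈ Ω, vnormSq (A i) = frobSq A := by
    rw [hfA]; exact Finset.sum_compl_add_sum Ω _
  have hΩnn : 0 ≤ ∑ i ∈ Ω, vnormSq (A i) :=
    Finset.sum_nonneg fun i _ => (hApos i).le
  have hΩcnn : 0 ≤ ∑ i ∈ Ωᶜ, vnormSq (A i) :=
    Finset.sum_nonneg fun i _ => (hApos i).le
  have hSle : S ≤ frobSq A := by
    rw [hSdef, ← hsplitA]
    nlinarith
  have hSpos : 0 < S := by
    rw [hSdef]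
    nlinarith [hsplitA, hfApos]
  -- key inequality: frobSq R ≤ M * S
  have hkey : frobSq R ≤ M * S := by
    have h1 : ∑ i ∈ Ωᶜ, vnormSq (R i) ≤ M * ∑ i ∈ Ωᶜ, vnormSq (A i) := by
      rw [Finset.mul_sum]
      refine Finset.sum_le_sum fun i _ => ?_
      have := hmax i
      have hA := hApos i
      calc vnormSq (R i) = vnormSq (R i) / vnormSq (A i) * vnormSq (A i) := by
            field_simp
        _ ≤ M * vnormSq (A i) := by nlinarith
    have h2 : ∑ i ∈ Ω, vnormSq (R i) ≤ ε * M * ∑ i ∈ Ω, vnormSq (A i) := by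
      rw [Finset.mul_sum]
      refine Finset.sum_le_sum fun i hi => ?_
      have hmem : vnormSq (R i) / vnormSq (A i)
          < (1 / (m : ℝ)) * ∑ j : Fin m, vnormSq (R j) / vnormSq (A j) := by
        have := hi
        rw [hΩ, Finset.mem_filter] at this
        exact this.2
      rw [hεdef] at hmem
      have hA := hApos i
      calc vnormSq (R i) = vnormSq (R i) / vnormSq (A i) * vnormSq (A i) := by
            field_simp
        _ ≤ ε * M * vnormSq (A i) := by nlinarith
    have hsplitR : frobSq R = ∑ i ∈ Ωᶜ, vnormSq (R i) + ∑ i ∈ Ω, vnormSq (R i) := by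
      rw [hfR, Finset.sum_compl_add_sum]
    rw [hsplitR, hSdef]
    nlinarith
  have h2 : (1 / 2) / S + (1 / 2) / frobSq A ≤ ζ := by
    rw [hζ]
    have : (1 : ℝ) / S ≤ M / frobSq R := by
      rw [div_le_div_iff₀ hSpos hfRpos]
      linarith
    have e1 : (1 / 2 : ℝ) / S = (1 / 2) * (1 / S) := by ring
    have e2 : (1 / 2 : ℝ) / frobSq A = (1 / 2) * (1 / frobSq A) := by ring
    rw [e1, e2]
    nlinarith
  refine ⟨?_, h2, ?_⟩
  · have := mul_le_mul_of_nonneg_right h2 hfApos.le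
    have e : ((1 / 2) / S + (1 / 2) / frobSq A) * frobSq A
        = (1 / 2) * frobSq A / S + 1 / 2 := by
      field_simp
    linarith [e ▸ this]
  · have : (1 / 2 : ℝ) / frobSq A ≤ (1 / 2) / S :=
      div_le_div_of_nonneg_left (by norm_num) hSpos hSle
    have e : (1 : ℝ) / frobSq A = (1 / 2) / frobSq A + (1 / 2) / frobSq A := by ring
    linarith [e]
end
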